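/- Let m > 0 and F(τ,u,v,t) be a function of degree m (F = e^{2πimt}F(τ,u,v,0)), real-analytic in v and v̄. Define θ_F = −2i y^{1/2} e^{4πm a² y} ∂F/∂v̄, where τ = x+iy and a = Im v / Im τ. Then θ_F is holomorphic in v̄ (i.e. ∂θ_F/∂v = 0) if and only if ΔF = 0, where Δ = 2a ∂_t ∂_{v̄} − ∂_v ∂_{v̄} (on degree-m functions, ΔF = 4πima ∂_{v̄}F − ∂_v∂_{v̄}F). -/

import Mathlib

open Complex

noncomputable def πc : ℂ := Real.pi

/-- Holomorphic Wirtinger derivative `∂f/∂z`. -/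
noncomputable def wd (f : ℂ → ℂ) (z : ℂ) : ℂ :=
  (fderiv ℝ f z 1 - Complex.I * fderiv ℝ f z Complex.I) / 2

/-- Antiholomorphic Wirtinger derivative `∂f/∂z̄`. -/
noncomputable def wdb (f : ℂ → ℂ) (z : ℂ) : ℂ :=
  (fderiv ℝ f z 1 + Complex.I * fderiv ℝ f z Complex.I) / 2

/-- The operator `Δ = 2a ∂_t ∂_{v̄} − ∂_v ∂_{v̄}` with `a = (v−v̄)/(τ−τ̄)`. -/
noncomputable def DeltaOp (F : ℂ → ℂ → ℂ → ℂ → ℂ) : ℂ → ℂ → ℂ → ℂ → ℂ := fun τ u v t =>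
  2 * ((v - (starRingEnd ℂ) v) / (τ - (starRingEnd ℂ) τ)) *
      wd (fun t' => wdb (fun v' => F τ u v' t') v) t -
    wd (fun v' => wdb (fun v'' => F τ u v'' t) v') v

/-- `θ_F = −2i y^{1/2} e^{4πm a² y} ∂F/∂v̄`, where `y = Im τ`, `a = Im v / Im τ`. -/
noncomputable def thetaF (m : ℝ) (F : ℂ → ℂ → ℂ → ℂ → ℂ) : ℂ → ℂ → ℂ → ℂ → ℂ :=
  fun τ u v t =>
    -2 * I * (Real.sqrt τ.im : ℂ) *
      Complex.exp ((4 * Real.pi * m * (v.im / τ.im) ^ 2 * τ.im : ℝ) : ℂ) *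
      wdb (fun v' => F τ u v' t) v

lemma wd_eq_of_hasDerivAt {f : ℂ → ℂ} {z d : ℂ} (h : HasDerivAt f d z) : wd f z = d := by
  have h' := (h.hasFDerivAt.restrictScalars ℝ)
  rw [wd, h'.fderiv]
  simp [smul_eq_mul]
  linear_combination (-d/2) * Complex.I_sq

lemma wd_const_mul (a : ℂ) {f : ℂ → ℂ} {z : ℂ} (hf : DifferentiableAt ℝ f z) :
    wd (fun w => a * f w) z = a * wd f z := by
  rw [wd, wd, fderiv_const_mul hf a]
  simp [smul_eq_mul]; ring

lemma wdb_const_mul (a : ℂ) {f : ℂ → ℂ} {z : ℂ} (hf : DifferentiableAt ℝ f z) :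
    wdb (fun w => a * f w) z = a * wdb f z := by
  rw [wdb, wdb, fderiv_const_mul hf a]
  simp [smul_eq_mul]; ring

lemma wd_mul {f g : ℂ → ℂ} {z : ℂ} (hf : DifferentiableAt ℝ f z) (hg : DifferentiableAt ℝ g z) :
    wd (fun w => f w * g w) z = wd f z * g z + f z * wd g z := by
  rw [wd, wd, wd, fderiv_fun_mul hf hg]
  simp [smul_eq_mul]; ring

lemma hasFDerivAt_expfac (k : ℝ) (v : ℂ) :
    HasFDerivAt (fun w : ℂ => Complex.exp ((k * w.im ^ 2 : ℝ) : ℂ))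
      (Complex.exp ((k * v.im ^ 2 : ℝ) : ℂ) •
        (Complex.ofRealCLM.comp (k • (v.im • Complex.imCLM + v.im • Complex.imCLM)))) v := by
  have him : HasFDerivAt (fun w : ℂ => w.im) Complex.imCLM v := Complex.imCLM.hasFDerivAt
  have hsq : HasFDerivAt (fun w : ℂ => k * w.im ^ 2)
      (k • (v.im • Complex.imCLM + v.im • Complex.imCLM)) v := by
    have h2 := (him.mul him).const_mul k
    simpa [pow_two] using h2
  exact (Complex.ofRealCLM.hasFDerivAt.comp v hsq).cexp

lemma wd_expfac (k : ℝ) (v : ℂ) :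
    wd (fun w : ℂ => Complex.exp ((k * w.im ^ 2 : ℝ) : ℂ)) v
      = Complex.exp ((k * v.im ^ 2 : ℝ) : ℂ) * (-I * k * v.im) := by
  rw [wd, (hasFDerivAt_expfac k v).fderiv]
  simp [smul_eq_mul]
  ring

/-- `θ_F` is holomorphic in `v̄` (i.e. `∂θ_F/∂v = 0`) if and only if `ΔF = 0`. -/
theorem thetaF_holomorphic_iff (m : ℝ) (hm : 0 < m) (F : ℂ → ℂ → ℂ → ℂ → ℂ)
    (hF : ∀ τ u v t, F τ u v t = Complex.exp (2 * πc * I * m * t) * F τ u v 0)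
    (hsm : ContDiff ℝ (⊤ : ℕ∞) (fun p : ℂ × ℂ × ℂ × ℂ => F p.1 p.2.1 p.2.2.1 p.2.2.2))
    (τ u v t : ℂ) (hτ : 0 < τ.im) :
    wd (fun v' => thetaF m F τ u v' t) v = 0 ↔ DeltaOp F τ u v t = 0 := by
  have hy0 : (τ.im : ℝ) ≠ 0 := ne_of_gt hτ
  -- smoothness of slices
  have hslice : ∀ t0 : ℂ, ContDiff ℝ (⊤ : ℕ∞) (fun v' : ℂ => F τ u v' t0) := fun t0 =>
    hsm.comp (contDiff_const.prodMk (contDiff_const.prodMk (contDiff_id.prodMk contDiff_const)))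
  set G : ℂ → ℂ := fun v' => wdb (fun v'' => F τ u v'' t) v' with hGdef
  have hG : ContDiff ℝ (⊤ : ℕ∞) G := by
    have h1 : ContDiff ℝ (⊤ : ℕ∞) (fun v' : ℂ => fderiv ℝ (fun v'' => F τ u v'' t) v') :=
      (hslice t).fderiv_right (mod_cast le_top)
    exact (((h1.clm_apply contDiff_const).add
      (contDiff_const.mul (h1.clm_apply contDiff_const))).div_const 2)
  have hGd : DifferentiableAt ℝ G v := (hG.differentiable (by simp)).differentiableAt
  -- the scalar factor
  set k : ℝ := 4 * Real.pi * m / τ.im with hk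
  set K : ℂ := -2 * I * (Real.sqrt τ.im : ℂ) with hK
  set E : ℂ → ℂ := fun w => Complex.exp ((k * w.im ^ 2 : ℝ) : ℂ) with hE
  have hexpand : ∀ w : ℂ,
      (((4 * Real.pi * m * (w.im / τ.im) ^ 2 * τ.im : ℝ)) : ℂ) = ((k * w.im ^ 2 : ℝ) : ℂ) := by
    intro w
    norm_cast
    rw [hk]
    field_simp
  have hθ : (fun v' => thetaF m F τ u v' t) = fun v' => (K * E v') * G v' := by
    funext v'
    simp only [thetaF, hGdef, hE, hK, hexpand v']
  have hEd : DifferentiableAt ℝ E v := (hasFDerivAt_expfac k v).differentiableAt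
  have hKEd : DifferentiableAt ℝ (fun w => K * E w) v := hEd.const_mul K
  have hwdKE : wd (fun w => K * E w) v = (K * E v) * (-I * k * v.im) := by
    rw [wd_const_mul K hEd, wd_expfac k v]
    ring
  have hprod : wd (fun v' => thetaF m F τ u v' t) v
      = (K * E v) * (-I * k * v.im) * G v + (K * E v) * wd G v := by
    rw [hθ, wd_mul hKEd hGd, hwdKE]
  -- the t-derivative term
  have hre : ∀ t' : ℂ, wdb (fun v' => F τ u v' t') v
      = Complex.exp (2 * πc * I * m * t') * wdb (fun v' => F τ u v' 0) v := by
    intro t'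
    have heq : (fun v' => F τ u v' t') = fun v' => Complex.exp (2 * πc * I * m * t') * F τ u v' 0 :=
      funext fun v' => hF τ u v' t'
    rw [heq, wdb_const_mul _ ((hslice 0).differentiable (by simp)).differentiableAt]
  set C : ℂ := wdb (fun v' => F τ u v' 0) v with hC
  have hterm1 : wd (fun t' => wdb (fun v' => F τ u v' t') v) t
      = (2 * πc * I * m) * G v := by
    have heq : (fun t' => wdb (fun v' => F τ u v' t') v)
        = fun t' => Complex.exp (2 * πc * I * m * t') * C := funext hre
    rw [heq]
    have h1 : HasDerivAt (fun t' : ℂ => 2 * πc * I * m * t') (2 * πc * I * m) t := by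
      simpa using (hasDerivAt_id t).const_mul (2 * πc * I * m)
    have h2 := (h1.cexp).mul_const C
    rw [wd_eq_of_hasDerivAt h2, hGdef]
    beta_reduce
    rw [hre t]
    ring
  -- put things together
  have hA : (v - (starRingEnd ℂ) v) / (τ - (starRingEnd ℂ) τ) = (v.im : ℂ) / (τ.im : ℂ) := by
    rw [Complex.sub_conj, Complex.sub_conj]
    rw [mul_div_mul_right _ _ Complex.I_ne_zero]
    push_cast
    rw [mul_div_mul_left _ _ (by norm_num : (2:ℂ) ≠ 0)]
  have hDelta : DeltaOp F τ u v t
      = (2 * ((v.im : ℂ) / (τ.im : ℂ)) * (2 * πc * I * m)) * G v - wd G v := by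
    rw [DeltaOp, hterm1, hA]
    ring
  have hkey : wd (fun v' => thetaF m F τ u v' t) v = -(K * E v) * DeltaOp F τ u v t := by
    rw [hprod, hDelta]
    have hkc : (k : ℂ) = 4 * πc * m / (τ.im : ℂ) := by
      rw [hk, πc]; push_cast; ring
    rw [hkc]
    have hyne : ((τ.im : ℝ) : ℂ) ≠ 0 := Complex.ofReal_ne_zero.mpr hy0
    field_simp
    ring
  have hKE0 : K * E v ≠ 0 := by
    apply mul_ne_zero
    · rw [hK]
      refine mul_ne_zero (mul_ne_zero (by norm_num) Complex.I_ne_zero) ?_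
      exact_mod_cast Complex.ofReal_ne_zero.mpr (ne_of_gt (Real.sqrt_pos.mpr hτ))
    · exact Complex.exp_ne_zero _
  rw [hkey]
  constructor
  · intro h
    rcases mul_eq_zero.mp h with h' | h'
    · exact absurd h' (neg_ne_zero.mpr hKE0)
    · exact h'
  · intro h; rw [h, mul_zero]
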